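/- arXiv:2208.03265 — 2 statements merged into one kernel-verified Lean document; each statement's English description precedes it below -/
import Mathlib

section
/- Mismatched delay bound: Let q' be a further probability mass function on X with supp q' ⊆ supp p ∩ supp q, suppose Δ := D(q'‖p) − D(q'‖q) > 0, and let h ≥ 0. Then under P_{q'} (the X_i i.i.d. with law q'), E[T_1] ≤ (h + C')/Δ, where C' := max_{x ∈ supp q'} log(q(x)/p(x)). -/
/-!
Under `q'` the increments `Zᵢ = log (q Xᵢ / p Xᵢ)` are almost surely finite, independent, bounded
above by `C'`, and have mean `D(q'‖p) − D(q'‖q) = Δ`. Write `E[T₁] = ∑ₖ P(T₁ > k)`. The event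
`{T₁ > i}` is decided by `Z₁, …, Zᵢ`, so it is independent of `Zᵢ₊₁`, and Wald's argument gives
`Δ · ∑_{i<n} P(T₁ > i) = E[S_{min(n, T₁)}]`. The stopped walk never exceeds `h + C'`: one step
before stopping it is below `h`, and one increment adds at most `C'`. Letting `n → ∞` gives
`E[T₁] ≤ (h + C')/Δ`.
-/

open MeasureTheory ProbabilityTheory Real Filter
open scoped ENNReal NNReal

noncomputable section

namespace QCPD

variable {X : Type*}

/-- The measure on `X` induced by a probability mass function `p`. -/
def pmfMeasure [Fintype X] [MeasurableSpace X] (p : X → ℝ) : Measure X :=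
  ∑ x : X, ENNReal.ofReal (p x) • Measure.dirac x

/-- `p` is a probability mass function on the finite type `X`. -/
def IsPMF [Fintype X] (p : X → ℝ) : Prop := (∀ x, 0 ≤ p x) ∧ ∑ x, p x = 1

/-- Under `P`, the coordinates of `Ω = ℕ → X` are independent and the `i`-th
coordinate (representing `X_{i+1}`) has law given by the pmf `r i`.  For i.i.d.
pmfs this characterizes the infinite product measure. -/
def HasLaw [Fintype X] [MeasurableSpace X] (P : Measure (ℕ → X)) (r : ℕ → X → ℝ) : Prop :=
  iIndepFun (fun i (ω : ℕ → X) => ω i) P ∧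
    ∀ i, P.map (fun ω => ω i) = pmfMeasure (r i)

/-- The log-likelihood ratio `log (q x / p x)`, valued in the extended reals,
with the conventions `log 0 = −∞` (and `log ∞ = ∞`). -/
def llr (p q : X → ℝ) (x : X) : EReal :=
  ENNReal.log (ENNReal.ofReal (q x) / ENNReal.ofReal (p x))

/-- `S_n = ∑_{i=1}^n Z_i` where `Z_i = log (q (X_i) / p (X_i))`; the `i`-th
coordinate of `ω` represents `X_{i+1}`. -/
def llrSum (p q : X → ℝ) (n : ℕ) (ω : ℕ → X) : EReal :=
  ∑ i ∈ Finset.range n, llr p q (ω i)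

/-- `T₁ = inf {n ≥ 1 : S_n ≥ h}`, with value `∞` if no such `n` exists. -/
def T1 (p q : X → ℝ) (h : ℝ) (ω : ℕ → X) : ℕ∞ :=
  sInf ((↑) '' {n : ℕ | 1 ≤ n ∧ (h : EReal) ≤ llrSum p q n ω})

/-- Kullback–Leibler divergence `D(q‖p) = ∑_{x ∈ supp q} q x · log (q x / p x)`. -/
def KL [Fintype X] (q p : X → ℝ) : ℝ :=
  ∑ x ∈ Finset.univ.filter (fun x => 0 < q x), q x * Real.log (q x / p x)

def firstPassage {β : Type*} [LE β] (s : ℕ → β) (h : β) : ℕ∞ :=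
  sInf ((↑) '' {n : ℕ | 1 ≤ n ∧ h ≤ s n})

section FirstPassage

variable {β : Type*} [LinearOrder β] {s : ℕ → β} {h : β}

lemma lt_firstPassage_iff {k : ℕ} :
    (k : ℕ∞) < firstPassage s h ↔ ∀ m, 1 ≤ m → m ≤ k → s m < h := by
  rw [firstPassage, ← ENat.add_one_le_iff (ENat.natCast_ne_top k), le_sInf_iff]
  constructor
  · intro hk m hm hmk
    by_contra! hsm
    have := hk _ ⟨m, ⟨hm, hsm⟩, rfl⟩
    norm_cast at this
    omega
  · rintro hall _ ⟨m, ⟨hm, hsm⟩, rfl⟩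
    by_contra! hmk
    norm_cast at hmk
    exact (hall m hm (by omega)).not_ge hsm

lemma firstPassage_coe_ereal (s : ℕ → ℝ) (h : ℝ) :
    firstPassage (fun n => (s n : EReal)) (h : EReal) = firstPassage s h := by
  simp only [firstPassage, EReal.coe_le_coe_iff]

/-- The partial sum just before the passage is at most `h`, and the last increment adds at most
`C`. -/
lemma sum_ite_lt_firstPassage_le {z : ℕ → ℝ} {h C : ℝ} (hh : 0 ≤ h) (hC : 0 ≤ C)
    (hz : ∀ i, z i ≤ C) (n : ℕ) :
    ∑ i ∈ Finset.range n,
      (if (i : ℕ∞) < firstPassage (fun m => ∑ j ∈ Finset.range m, z j) h then z i else 0)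
      ≤ h + C := by
  set τ := firstPassage (fun m => ∑ j ∈ Finset.range m, z j) h
  have partial_le : ∀ m : ℕ, (m : ℕ∞) < τ → ∑ j ∈ Finset.range m, z j ≤ h := by
    rintro (_ | m) hm
    · simpa using hh
    · exact (lt_firstPassage_iff.mp hm _ (by omega) le_rfl).le
  induction n with
  | zero => simpa using add_nonneg hh hC
  | succ n ih =>
    rw [Finset.sum_range_succ]
    split_ifs with hn
    · have stopped_eq : ∀ i ∈ Finset.range n,
          (if (i : ℕ∞) < τ then z i else 0) = z i := fun i hi =>
        if_pos (lt_trans (by exact_mod_cast Finset.mem_range.mp hi) hn)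
      rw [Finset.sum_congr rfl stopped_eq]
      linarith [partial_le n hn, hz n]
    · simpa using ih

end FirstPassage

theorem _root_.ENat.toENNReal_eq_tsum_ite_lt (m : ℕ∞) :
    (m : ℝ≥0∞) = ∑' k : ℕ, if (k : ℕ∞) < m then 1 else 0 := by
  induction m using ENat.recTopCoe with
  | top => simp
  | coe n =>
    rw [tsum_eq_sum (s := Finset.range n) fun k hk => if_neg (by simpa using hk),
      Finset.sum_congr rfl fun k hk => if_pos (by simpa using hk)]
    simp

theorem lintegral_enat_eq_tsum_measure_lt {Ω : Type*} [MeasurableSpace Ω] (μ : Measure Ω)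
    {T : Ω → ℕ∞} (hT : ∀ k : ℕ, MeasurableSet {ω | (k : ℕ∞) < T ω}) :
    ∫⁻ ω, (T ω : ℝ≥0∞) ∂μ = ∑' k : ℕ, μ {ω | (k : ℕ∞) < T ω} := by
  simp_rw [ENat.toENNReal_eq_tsum_ite_lt]
  rw [lintegral_tsum fun k =>
    (Measurable.ite (hT k) measurable_const measurable_const).aemeasurable]
  refine tsum_congr fun k => ?_
  rw [← lintegral_indicator_one (hT k)]
  simp only [Set.indicator_apply, Set.mem_ofPred_eq, Pi.one_apply]

section Wald

variable {Ω : Type*} {Z : ℕ → Ω → ℝ} {h : ℝ}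

lemma measurableSet_lt_firstPassage {m : MeasurableSpace Ω} {k : ℕ}
    (hZ : ∀ i < k, Measurable[m] (Z i)) :
    MeasurableSet[m] {ω | (k : ℕ∞) < firstPassage (fun n => ∑ j ∈ Finset.range n, Z j ω) h} := by
  have : {ω | (k : ℕ∞) < firstPassage (fun n => ∑ j ∈ Finset.range n, Z j ω) h}
      = ⋂ n, ⋂ (_ : 1 ≤ n), ⋂ (_ : n ≤ k), {ω | ∑ j ∈ Finset.range n, Z j ω < h} := by
    ext ω
    simp [lt_firstPassage_iff]
  rw [this]
  refine .iInter fun n => .iInter fun _ => .iInter fun hn => measurableSet_lt ?_ measurable_const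
  exact Finset.measurable_sum _ fun j hj => hZ j (by simp at hj; omega)

/-- Whether the walk is still running at step `i` is decided by `Z 0, …, Z (i-1)`. -/
lemma indepFun_indicator_lt_firstPassage [MeasurableSpace Ω] {μ : Measure Ω}
    (hZ : ∀ i, Measurable (Z i)) (hind : iIndepFun Z μ) (i : ℕ) :
    IndepFun ({ω | (i : ℕ∞) < firstPassage (fun n => ∑ j ∈ Finset.range n, Z j ω) h}.indicator
      (1 : Ω → ℝ)) (Z i) μ := by
  have hpast := indep_iSup_of_disjoint (fun j => (hZ j).comap_le) hind.iIndep
    (S := {j | j < i}) (T := {i}) (by simp)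
  rw [iSup_singleton] at hpast
  rw [IndepFun_iff_Indep]
  refine indep_of_indep_of_le_left hpast (Measurable.comap_le ?_)
  refine measurable_const.indicator (measurableSet_lt_firstPassage fun j hj => ?_)
  exact measurable_iff_comap_le.2 (le_iSup₂_of_le j hj le_rfl)

theorem lintegral_firstPassage_le [MeasurableSpace Ω] {μ : Measure Ω} {Δ C : ℝ}
    (hZ : ∀ i, Measurable (Z i)) (hind : iIndepFun Z μ)
    (hint : ∀ i, Integrable (Z i) μ) (hmean : ∀ i, μ[Z i] = Δ) (hΔ : 0 < Δ) (hh : 0 ≤ h)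
    (hZC : ∀ᵐ ω ∂μ, ∀ i, Z i ω ≤ C) :
    ∫⁻ ω, (firstPassage (fun n => ∑ j ∈ Finset.range n, Z j ω) h : ℝ≥0∞) ∂μ
      ≤ ENNReal.ofReal ((h + C) / Δ) := by
  have := hind.isProbabilityMeasure
  set A : ℕ → Set Ω := fun i =>
    {ω | (i : ℕ∞) < firstPassage (fun n => ∑ j ∈ Finset.range n, Z j ω) h}
  have hA : ∀ i, MeasurableSet (A i) := fun i => measurableSet_lt_firstPassage fun j _ => hZ j
  have hC : 0 ≤ C := by
    have hΔC := integral_mono_ae (hint 0) (integrable_const C) (hZC.mono fun ω hω => hω 0)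
    rw [hmean 0, integral_const, probReal_univ, one_smul] at hΔC
    linarith
  have stopped_mean : ∀ i, ∫ ω, (A i).indicator (Z i) ω ∂μ = μ.real (A i) * Δ := by
    intro i
    have hprod := (indepFun_indicator_lt_firstPassage hZ hind i).integral_fun_mul_eq_mul_integral
      (measurable_const.indicator (hA i)).aestronglyMeasurable (hZ i).aestronglyMeasurable
    rw [integral_indicator_one (hA i), hmean i] at hprod
    rw [← hprod]
    congr 1 with ω
    simp only [A, Set.indicator_apply, Pi.one_apply, ite_mul, one_mul, zero_mul]
  have stopped_sum_le : ∀ n, ∑ i ∈ Finset.range n, μ.real (A i) * Δ ≤ h + C := by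
    intro n
    calc ∑ i ∈ Finset.range n, μ.real (A i) * Δ
        = ∫ ω, ∑ i ∈ Finset.range n, (A i).indicator (Z i) ω ∂μ := by
          rw [integral_finsetSum _ fun i _ => (hint i).indicator (hA i)]
          exact Finset.sum_congr rfl fun i _ => (stopped_mean i).symm
      _ ≤ ∫ _, (h + C) ∂μ := by
          refine integral_mono_ae
            (integrable_finsetSum _ fun i _ => (hint i).indicator (hA i)) (integrable_const _) ?_
          filter_upwards [hZC] with ω hω
          simpa only [A, Set.indicator_apply, Set.mem_ofPred_eq]
            using sum_ite_lt_firstPassage_le hh hC hω n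
      _ = h + C := by simp
  rw [lintegral_enat_eq_tsum_measure_lt μ hA]
  refine ENNReal.tsum_le_of_sum_range_le fun n => ?_
  rw [← Finset.sum_congr rfl fun i _ => ofReal_measureReal,
    ← ENNReal.ofReal_sum_of_nonneg fun i _ => measureReal_nonneg]
  refine ENNReal.ofReal_le_ofReal ((le_div_iff₀ hΔ).2 ?_)
  rw [Finset.sum_mul]
  exact stopped_sum_le n

end Wald

theorem _root_.EReal.coe_finsetSum {ι : Type*} (s : Finset ι) (f : ι → ℝ) :
    ((∑ i ∈ s, f i : ℝ) : EReal) = ∑ i ∈ s, (f i : EReal) :=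
  map_sum (⟨⟨(↑), EReal.coe_zero⟩, EReal.coe_add⟩ : ℝ →+ EReal) f s

lemma llr_eq_coe {p q : X → ℝ} {x : X} (hp : 0 < p x) (hq : 0 < q x) :
    llr p q x = (Real.log (q x / p x) : EReal) := by
  rw [llr, ← ENNReal.ofReal_div_of_pos hp, ENNReal.log_ofReal_of_pos (div_pos hq hp)]

lemma T1_eq_firstPassage {p q : X → ℝ} {h : ℝ} {ω : ℕ → X}
    (hω : ∀ i, 0 < p (ω i) ∧ 0 < q (ω i)) :
    T1 p q h ω = firstPassage (fun n => ∑ j ∈ Finset.range n, Real.log (q (ω j) / p (ω j))) h := by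
  rw [← firstPassage_coe_ereal]
  simp only [T1, llrSum, EReal.coe_finsetSum, llr_eq_coe (hω _).1 (hω _).2]
  rfl

lemma KL_sub_KL [Fintype X] {p q q' : X → ℝ} (hq' : ∀ x, 0 ≤ q' x)
    (hsupp : ∀ x, 0 < q' x → 0 < p x ∧ 0 < q x) :
    KL q' p - KL q' q = ∑ x, q' x * Real.log (q x / p x) := by
  rw [KL, KL, ← Finset.sum_sub_distrib, Finset.sum_filter]
  refine Finset.sum_congr rfl fun x _ => ?_
  split_ifs with hx
  · obtain ⟨hp, hq⟩ := hsupp x hx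
    rw [Real.log_div hq.ne' hp.ne', Real.log_div hx.ne' hp.ne', Real.log_div hx.ne' hq.ne']
    ring
  · simp [le_antisymm (not_lt.1 hx) (hq' x)]

section Law

variable [Fintype X] [MeasurableSpace X] [DiscreteMeasurableSpace X]

lemma integral_pmfMeasure {r : X → ℝ} (hr : ∀ x, 0 ≤ r x) (f : X → ℝ) :
    ∫ x, f x ∂pmfMeasure r = ∑ x, r x * f x := by
  rw [pmfMeasure, integral_finsetSum_measure fun x _ =>
    Integrable.of_finite.smul_measure ENNReal.ofReal_ne_top]
  simp [integral_smul_measure, ENNReal.toReal_ofReal (hr _)]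

lemma ae_pos_pmfMeasure (r : X → ℝ) : ∀ᵐ x ∂pmfMeasure r, 0 < r x := by
  rw [ae_iff, pmfMeasure, Measure.coe_finsetSum, Finset.sum_apply]
  refine Finset.sum_eq_zero fun x _ => ?_
  by_cases hx : 0 < r x
  · simp [hx]
  · simp [ENNReal.ofReal_eq_zero.2 (not_lt.1 hx)]

variable {P : Measure (ℕ → X)} {r : ℕ → X → ℝ}

lemma HasLaw.integral_comp_eval (hP : HasLaw P r) (hr : ∀ i x, 0 ≤ r i x) (f : X → ℝ) (i : ℕ) :
    ∫ ω, f (ω i) ∂P = ∑ x, r i x * f x := by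
  rw [← integral_map (measurable_pi_apply i).aemeasurable .of_discrete, hP.2 i,
    integral_pmfMeasure (hr i)]

lemma HasLaw.ae_pos (hP : HasLaw P r) : ∀ᵐ ω ∂P, ∀ i, 0 < r i (ω i) :=
  ae_all_iff.2 fun i =>
    ae_of_ae_map (measurable_pi_apply i).aemeasurable (hP.2 i ▸ ae_pos_pmfMeasure (r i))

end Law

theorem mismatched_delay_bound_general
    [Fintype X] [MeasurableSpace X] [DiscreteMeasurableSpace X]
    (p q q' : X → ℝ) (hq' : IsPMF q')
    (hsupp : ∀ x, 0 < q' x → 0 < p x ∧ 0 < q x)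
    (Δ : ℝ) (hΔ : Δ = KL q' p - KL q' q) (hΔpos : 0 < Δ)
    (h : ℝ) (hh : 0 ≤ h)
    (C' : ℝ) (hC' : C' = sSup {y : ℝ | ∃ x, 0 < q' x ∧ y = Real.log (q x / p x)})
    (P : Measure (ℕ → X)) [IsProbabilityMeasure P] (hP : HasLaw P (fun _ => q')) :
    ∫⁻ ω, (T1 p q h ω : ℝ≥0∞) ∂P ≤ ENNReal.ofReal ((h + C') / Δ) := by
  have hZ_meas : ∀ i, Measurable fun ω : ℕ → X => Real.log (q (ω i) / p (ω i)) := fun i =>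
    (Measurable.of_discrete (f := fun x => Real.log (q x / p x))).comp (measurable_pi_apply i)
  have hZ_le : ∀ x, 0 < q' x → Real.log (q x / p x) ≤ C' := fun x hx =>
    hC' ▸ le_csSup ((Set.finite_range fun x => Real.log (q x / p x)).subset
      (by rintro _ ⟨x, -, rfl⟩; exact ⟨x, rfl⟩)).bddAbove ⟨x, hx, rfl⟩
  have hZ_indep : iIndepFun (fun i (ω : ℕ → X) => Real.log (q (ω i) / p (ω i))) P :=
    hP.1.comp (fun _ x => Real.log (q x / p x)) fun _ => .of_discrete
  have hZ_int : ∀ i, Integrable (fun ω : ℕ → X => Real.log (q (ω i) / p (ω i))) P := fun i =>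
    (integrable_map_measure (g := fun x => Real.log (q x / p x))
      Measurable.of_discrete.aestronglyMeasurable (measurable_pi_apply i).aemeasurable).1
      Integrable.of_finite
  have hZ_mean : ∀ i, ∫ ω, Real.log (q (ω i) / p (ω i)) ∂P = Δ := fun i => by
    rw [hP.integral_comp_eval (fun _ => hq'.1) (fun x => Real.log (q x / p x)), hΔ,
      KL_sub_KL hq'.1 hsupp]
  calc ∫⁻ ω, (T1 p q h ω : ℝ≥0∞) ∂P
      = ∫⁻ ω, (firstPassage (fun n => ∑ j ∈ Finset.range n, Real.log (q (ω j) / p (ω j))) h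
          : ℝ≥0∞) ∂P :=
        lintegral_congr_ae <| hP.ae_pos.mono fun ω hω => by
          simp only [T1_eq_firstPassage fun i => hsupp _ (hω i)]
    _ ≤ ENNReal.ofReal ((h + C') / Δ) :=
        lintegral_firstPassage_le hZ_meas hZ_indep hZ_int hZ_mean hΔpos hh
          (hP.ae_pos.mono fun ω hω i => hZ_le _ (hω i))

/-- **Mismatched delay bound.** If `supp q' ⊆ supp p ∩ supp q`,
`Δ := D(q'‖p) − D(q'‖q) > 0`, and `h ≥ 0`, then under the i.i.d.-`q'` measure,
`E[T₁] ≤ (h + C')/Δ`, where `C' = max_{x ∈ supp q'} log (q x / p x)`. -/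
theorem mismatched_delay_bound
    [Fintype X] [Nonempty X] [MeasurableSpace X] [DiscreteMeasurableSpace X]
    (p q q' : X → ℝ) (hp : IsPMF p) (hq : IsPMF q) (hq' : IsPMF q')
    (hsupp : ∀ x, 0 < q' x → 0 < p x ∧ 0 < q x)
    (Δ : ℝ) (hΔ : Δ = KL q' p - KL q' q) (hΔpos : 0 < Δ)
    (h : ℝ) (hh : 0 ≤ h)
    (C' : ℝ) (hC' : C' = sSup {y : ℝ | ∃ x, 0 < q' x ∧ y = Real.log (q x / p x)})
    (P : Measure (ℕ → X)) [IsProbabilityMeasure P] (hP : HasLaw P (fun _ => q')) :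
    ∫⁻ ω, (T1 p q h ω : ℝ≥0∞) ∂P ≤ ENNReal.ofReal ((h + C') / Δ) :=
  mismatched_delay_bound_general p q q' hq' hsupp Δ hΔ hΔpos h hh C' hC' P hP

end QCPD
end
end

section
/- Change-of-measure inequality for the change-point model: Assume supp q ⊆ supp p. Let T be a stopping time with respect to the canonical filtration, let ν ≥ 0 and m ≥ 1 be integers, and let c ∈ ℝ. Then P_ν(ν < T < ν + m) ≤ e^{c} · P_∞(T < ν + m) + P_ν( max_{ν ≤ n < ν + m} λ^{(ν)}_n ≥ c ). -/
open MeasureTheory ProbabilityTheory Real Filter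
open scoped ENNReal NNReal

noncomputable section

namespace QCPD

variable {X : Type*}

/-- The canonical filtration `F_n = σ(X_1, …, X_n)` on `Ω = ℕ → X` (the `i`-th
coordinate represents `X_{i+1}`). -/
def filt (X : Type*) [MeasurableSpace X] (n : ℕ) : MeasurableSpace (ℕ → X) :=
  MeasurableSpace.comap (fun ω (i : Fin n) => ω i) inferInstance

/-!
Sets depending only on `X_1, …, X_k` are unions of cylinders, and on a cylinder of length `k ≥ ν`
the density of `P_ν` with respect to `P_∞` is `exp λ^{(ν)}_k`. Split `{ν < T < ν + m}` into the
part where `λ^{(ν)}` reaches `c` before `ν + m` and the events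
`stopsBelow … k = {T = k, λ^{(ν)}_k < c}`, `ν < k < ν + m`. Since `T` is a stopping time, each of
these is determined by `X_1, …, X_k`, so its `P_ν`-probability is at most `e^c` times its
`P_∞`-probability; and they are disjoint subsets of `{T < ν + m}`.
-/

theorem _root_.EReal.exp_sum {ι : Type*} (s : Finset ι) (f : ι → EReal) :
    EReal.exp (∑ i ∈ s, f i) = ∏ i ∈ s, EReal.exp (f i) := by
  classical
  induction s using Finset.induction_on with
  | empty => simp
  | insert a s ha ih => rw [Finset.sum_insert ha, Finset.prod_insert ha, EReal.exp_add, ih]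

theorem _root_.MeasureTheory.measure_le_mul_of_forall_singleton {α : Type*} [Finite α]
    [MeasurableSpace α] [MeasurableSingletonClass α] {μ ν : Measure α} {C : ℝ≥0∞} {S : Set α}
    (h : ∀ a ∈ S, μ {a} ≤ C * ν {a}) : μ S ≤ C * ν S := by
  have hS := S.toFinite
  rw [← hS.coe_toFinset, ← sum_measure_singleton, ← sum_measure_singleton, Finset.mul_sum]
  exact Finset.sum_le_sum fun a ha => h a (hS.mem_toFinset.1 ha)

lemma ofReal_eq_exp_llr_mul {p q : X → ℝ} (hsupp : ∀ x, 0 < q x → 0 < p x) (x : X) :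
    ENNReal.ofReal (q x) = EReal.exp (llr p q x) * ENNReal.ofReal (p x) := by
  rw [llr, ENNReal.exp_log]
  by_cases hpx : 0 < p x
  · exact (ENNReal.div_mul_cancel (ENNReal.ofReal_pos.2 hpx).ne' ENNReal.ofReal_ne_top).symm
  · have hqx : q x ≤ 0 := not_lt.1 (mt (hsupp x) hpx)
    simp [ENNReal.ofReal_eq_zero.2 hqx, ENNReal.ofReal_eq_zero.2 (not_lt.1 hpx)]

lemma prod_ofReal_changePoint_eq {p q : X → ℝ} (hsupp : ∀ x, 0 < q x → 0 < p x) {ν n : ℕ}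
    (hνn : ν ≤ n) (ω : ℕ → X) :
    ∏ i ∈ Finset.range n, ENNReal.ofReal ((if i < ν then p else q) (ω i)) =
      EReal.exp (∑ i ∈ Finset.Ico ν n, llr p q (ω i)) *
        ∏ i ∈ Finset.range n, ENNReal.ofReal (p (ω i)) := by
  have hpre : ∀ i ∈ Finset.range ν,
      ENNReal.ofReal ((if i < ν then p else q) (ω i)) = ENNReal.ofReal (p (ω i)) :=
    fun i hi => by rw [if_pos (Finset.mem_range.1 hi)]
  have hpost : ∀ i ∈ Finset.Ico ν n, ENNReal.ofReal ((if i < ν then p else q) (ω i)) =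
      EReal.exp (llr p q (ω i)) * ENNReal.ofReal (p (ω i)) :=
    fun i hi => by rw [if_neg (not_lt.2 (Finset.mem_Ico.1 hi).1), ofReal_eq_exp_llr_mul hsupp]
  rw [← Finset.prod_range_mul_prod_Ico _ hνn, ← Finset.prod_range_mul_prod_Ico _ hνn,
    Finset.prod_congr rfl hpre, Finset.prod_congr rfl hpost, Finset.prod_mul_distrib,
    EReal.exp_sum]
  ring

lemma prod_ofReal_changePoint_le {p q : X → ℝ} (hsupp : ∀ x, 0 < q x → 0 < p x) {ν n : ℕ}
    (hνn : ν ≤ n) {c : ℝ} {ω : ℕ → X}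
    (hc : ¬ (c : EReal) ≤ ∑ i ∈ Finset.Ico ν n, llr p q (ω i)) :
    ∏ i ∈ Finset.range n, ENNReal.ofReal ((if i < ν then p else q) (ω i)) ≤
      ENNReal.ofReal (Real.exp c) * ∏ i ∈ Finset.range n, ENNReal.ofReal (p (ω i)) := by
  rw [prod_ofReal_changePoint_eq hsupp hνn, ← EReal.exp_coe]
  gcongr
  exact (not_le.1 hc).le

lemma pmfMeasure_singleton [Fintype X] [MeasurableSpace X] [MeasurableSingletonClass X]
    (p : X → ℝ) (x : X) : pmfMeasure p {x} = ENNReal.ofReal (p x) := by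
  classical
  simp [pmfMeasure, Measure.dirac_apply', Set.indicator_apply]

lemma HasLaw.measure_preimage_singleton [Fintype X] [MeasurableSpace X]
    [MeasurableSingletonClass X] {P : Measure (ℕ → X)} {r : ℕ → X → ℝ} (hP : HasLaw P r)
    {n : ℕ} (f : Fin n → X) :
    P ((fun ω (i : Fin n) => ω i) ⁻¹' {f}) = ∏ i : Fin n, ENNReal.ofReal (r i (f i)) := by
  have hcyl : (fun ω (i : Fin n) => ω i) ⁻¹' {f} =
      ⋂ i ∈ (Finset.univ : Finset (Fin n)), (fun ω : ℕ → X => ω i) ⁻¹' {f i} := by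
    ext ω
    simp [funext_iff]
  rw [hcyl, (hP.1.precomp Fin.val_injective).measure_inter_preimage_eq_mul _
    fun i _ => measurableSet_singleton (f i)]
  refine Finset.prod_congr rfl fun i _ => ?_
  rw [← Measure.map_apply (measurable_pi_apply _) (measurableSet_singleton _), hP.2,
    pmfMeasure_singleton]

lemma preimage_image_of_dependsOn {n : ℕ} {E : Set (ℕ → X)}
    (hE : DependsOn (· ∈ E) (Set.Iio n)) :
    (fun ω (i : Fin n) => ω i) ⁻¹' ((fun ω (i : Fin n) => ω i) '' E) = E := by
  refine subset_antisymm ?_ (Set.subset_preimage_image _ _)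
  rintro ω ⟨ω', hω', heq⟩
  exact (hE fun i hi => congrFun heq ⟨i, hi⟩).mp hω'

lemma measurableSet_of_dependsOn [Finite X] [MeasurableSpace X] [MeasurableSingletonClass X]
    {n : ℕ} {E : Set (ℕ → X)} (hE : DependsOn (· ∈ E) (Set.Iio n)) : MeasurableSet E := by
  rw [← preimage_image_of_dependsOn hE]
  exact (measurable_pi_lambda _ fun i : Fin n => measurable_pi_apply (i : ℕ))
    (Set.toFinite _).measurableSet

theorem HasLaw.measure_le_mul_of_dependsOn [Fintype X] [MeasurableSpace X]
    [MeasurableSingletonClass X] {P Q : Measure (ℕ → X)} {r s : ℕ → X → ℝ}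
    (hP : HasLaw P r) (hQ : HasLaw Q s) {n : ℕ} {E : Set (ℕ → X)}
    (hE : DependsOn (· ∈ E) (Set.Iio n)) {C : ℝ≥0∞}
    (h : ∀ ω ∈ E, ∏ i ∈ Finset.range n, ENNReal.ofReal (r i (ω i)) ≤
      C * ∏ i ∈ Finset.range n, ENNReal.ofReal (s i (ω i))) :
    P E ≤ C * Q E := by
  have hπ : Measurable fun (ω : ℕ → X) (i : Fin n) => ω i :=
    measurable_pi_lambda _ fun i => measurable_pi_apply (i : ℕ)
  rw [← preimage_image_of_dependsOn hE, ← Measure.map_apply hπ (Set.toFinite _).measurableSet,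
    ← Measure.map_apply hπ (Set.toFinite _).measurableSet]
  refine measure_le_mul_of_forall_singleton ?_
  rintro _ ⟨ω, hω, rfl⟩
  rw [Measure.map_apply hπ (measurableSet_singleton _),
    Measure.map_apply hπ (measurableSet_singleton _), hP.measure_preimage_singleton,
    hQ.measure_preimage_singleton,
    Fin.prod_univ_eq_prod_range (fun i => ENNReal.ofReal (r i (ω i))),
    Fin.prod_univ_eq_prod_range (fun i => ENNReal.ofReal (s i (ω i)))]
  exact h ω hω

lemma dependsOn_of_measurableSet_filt [MeasurableSpace X] {n : ℕ} {E : Set (ℕ → X)}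
    (hE : MeasurableSet[filt X n] E) : DependsOn (· ∈ E) (Set.Iio n) := by
  obtain ⟨S, -, rfl⟩ := hE
  intro ω ω' h
  have hπ : (fun i : Fin n => ω i) = fun i : Fin n => ω' i := funext fun i => h i i.isLt
  simp only [Set.mem_preimage, hπ]

lemma dependsOn_stoppingTime_eq [MeasurableSpace X] {T : (ℕ → X) → ℕ∞}
    (hT : ∀ n : ℕ, MeasurableSet[filt X n] {ω | T ω ≤ (n : ℕ∞)}) (k : ℕ) :
    DependsOn (fun ω => T ω = k) (Set.Iio k) := by
  have hle (n : ℕ) : DependsOn (fun ω => T ω ≤ n) (Set.Iio n) :=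
    dependsOn_of_measurableSet_filt (hT n)
  cases k with
  | zero => simpa only [Nat.cast_zero, nonpos_iff_eq_zero] using hle 0
  | succ j =>
    have hiff : (fun ω => T ω = ↑(j + 1)) = fun ω => T ω ≤ ↑(j + 1) ∧ ¬ T ω ≤ j := by
      funext ω
      rw [eq_iff_iff, le_antisymm_iff, not_le, Nat.cast_succ,
        ENat.add_one_le_iff (ENat.natCast_ne_top j)]
    rw [hiff]
    exact fun ω ω' h =>
      congrArg₂ And (hle (j + 1) h) (congrArg Not ((hle j).mono (Set.Iio_subset_Iio j.le_succ) h))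

section StopsBelow

variable {p q : X → ℝ} {T : (ℕ → X) → ℕ∞} {ν : ℕ} {c : ℝ}

def stopsBelow (p q : X → ℝ) (T : (ℕ → X) → ℕ∞) (ν : ℕ) (c : ℝ) (k : ℕ) : Set (ℕ → X) :=
  {ω | T ω = k ∧ ¬ (c : EReal) ≤ ∑ i ∈ Finset.Ico ν k, llr p q (ω i)}

lemma dependsOn_stopsBelow [MeasurableSpace X]
    (hT : ∀ n : ℕ, MeasurableSet[filt X n] {ω | T ω ≤ (n : ℕ∞)}) (k : ℕ) :
    DependsOn (· ∈ stopsBelow p q T ν c k) (Set.Iio k) := fun _ _ h =>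
  congrArg₂ And (dependsOn_stoppingTime_eq hT k h) <| congrArg (¬ (c : EReal) ≤ ·) <|
    Finset.sum_congr rfl fun i hi => congrArg _ (h i (Finset.mem_Ico.1 hi).2)

lemma subset_union_biUnion_stopsBelow (n : ℕ) :
    {ω | (ν : ℕ∞) < T ω ∧ T ω < (n : ℕ∞)} ⊆
      {ω | ∃ j : ℕ, ν ≤ j ∧ j < n ∧ (c : EReal) ≤ ∑ i ∈ Finset.Ico ν j, llr p q (ω i)} ∪
        ⋃ k ∈ Finset.Ioo ν n, stopsBelow p q T ν c k := by
  rintro ω ⟨hνT, hTn⟩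
  obtain ⟨k, hk⟩ := ENat.ne_top_iff_exists.1 hTn.ne_top
  rw [← hk, Nat.cast_lt] at hνT hTn
  by_cases hc : (c : EReal) ≤ ∑ i ∈ Finset.Ico ν k, llr p q (ω i)
  · exact Or.inl ⟨k, hνT.le, hTn, hc⟩
  · exact Or.inr (Set.mem_biUnion (Finset.mem_Ioo.2 ⟨hνT, hTn⟩) ⟨hk.symm, hc⟩)

lemma sum_measure_stopsBelow_le [Finite X] [MeasurableSpace X] [MeasurableSingletonClass X]
    (hT : ∀ n : ℕ, MeasurableSet[filt X n] {ω | T ω ≤ (n : ℕ∞)}) (P : Measure (ℕ → X))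
    (n : ℕ) :
    ∑ k ∈ Finset.Ioo ν n, P (stopsBelow p q T ν c k) ≤ P {ω | T ω < (n : ℕ∞)} := by
  have hdisjoint : (Finset.Ioo ν n : Set ℕ).PairwiseDisjoint (stopsBelow p q T ν c) :=
    fun k _ l _ hkl => Set.disjoint_left.2 fun ω hk hl =>
      hkl (by exact_mod_cast hk.1.symm.trans hl.1)
  rw [← measure_biUnion_finset hdisjoint fun k _ =>
    measurableSet_of_dependsOn (dependsOn_stopsBelow hT k)]
  refine measure_mono (Set.iUnion₂_subset fun k hk ω hω => ?_)
  show T ω < n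
  rw [hω.1]
  exact_mod_cast (Finset.mem_Ioo.1 hk).2

lemma HasLaw.measure_stopsBelow_le [Fintype X] [MeasurableSpace X] [MeasurableSingletonClass X]
    (hsupp : ∀ x, 0 < q x → 0 < p x) {Pν Pinf : Measure (ℕ → X)}
    (hPν : HasLaw Pν (fun i => if i < ν then p else q)) (hPinf : HasLaw Pinf (fun _ => p))
    (hT : ∀ n : ℕ, MeasurableSet[filt X n] {ω | T ω ≤ (n : ℕ∞)}) {k : ℕ} (hνk : ν ≤ k) :
    Pν (stopsBelow p q T ν c k) ≤ ENNReal.ofReal (Real.exp c) * Pinf (stopsBelow p q T ν c k) :=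
  hPν.measure_le_mul_of_dependsOn hPinf (dependsOn_stopsBelow hT k) fun _ hω =>
    prod_ofReal_changePoint_le hsupp hνk hω.2

end StopsBelow

theorem change_of_measure_inequality_general
    [Fintype X] [MeasurableSpace X] [DiscreteMeasurableSpace X]
    (p q : X → ℝ)
    (hsupp : ∀ x, 0 < q x → 0 < p x)
    (Pinf : Measure (ℕ → X))
    (hPinf : HasLaw Pinf (fun _ => p))
    (Pc : ℕ → Measure (ℕ → X))
    (hPc : ∀ ν, HasLaw (Pc ν) (fun i => if i < ν then p else q))
    (T : (ℕ → X) → ℕ∞)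
    (hstop : ∀ n : ℕ, MeasurableSet[filt X n] {ω | T ω ≤ (n : ℕ∞)})
    (ν m : ℕ) (c : ℝ) :
    Pc ν {ω | (ν : ℕ∞) < T ω ∧ T ω < ((ν + m : ℕ) : ℕ∞)} ≤
      ENNReal.ofReal (Real.exp c) * Pinf {ω | T ω < ((ν + m : ℕ) : ℕ∞)} +
      Pc ν {ω | ∃ n : ℕ, ν ≤ n ∧ n < ν + m ∧
        (c : EReal) ≤ ∑ i ∈ Finset.Ico ν n, llr p q (ω i)} := by
  set C : Set (ℕ → X) := {ω | ∃ n : ℕ, ν ≤ n ∧ n < ν + m ∧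
    (c : EReal) ≤ ∑ i ∈ Finset.Ico ν n, llr p q (ω i)}
  set E := stopsBelow p q T ν c
  calc Pc ν {ω | (ν : ℕ∞) < T ω ∧ T ω < ((ν + m : ℕ) : ℕ∞)}
      ≤ Pc ν C + ∑ k ∈ Finset.Ioo ν (ν + m), Pc ν (E k) :=
        (measure_mono (subset_union_biUnion_stopsBelow _)).trans <|
          (measure_union_le _ _).trans <| add_le_add_right (measure_biUnion_finset_le _ _) _
    _ ≤ Pc ν C + ∑ k ∈ Finset.Ioo ν (ν + m), ENNReal.ofReal (Real.exp c) * Pinf (E k) := by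
        gcongr with k hk
        exact (hPc ν).measure_stopsBelow_le hsupp hPinf hstop (Finset.mem_Ioo.1 hk).1.le
    _ ≤ Pc ν C + ENNReal.ofReal (Real.exp c) * Pinf {ω | T ω < ((ν + m : ℕ) : ℕ∞)} := by
        rw [← Finset.mul_sum]
        gcongr
        exact sum_measure_stopsBelow_le hstop Pinf _
    _ = _ := add_comm _ _

/-- **Change-of-measure inequality for the change-point model.** Assume
`supp q ⊆ supp p`.  For a stopping time `T` of the canonical filtration,
integers `ν ≥ 0`, `m ≥ 1` and `c ∈ ℝ`,
`P_ν(ν < T < ν + m) ≤ e^c · P_∞(T < ν + m) + P_ν(max_{ν ≤ n < ν + m} λ^{(ν)}_n ≥ c)`,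
where `λ^{(ν)}_n = ∑_{i=ν+1}^n log (q (X_i) / p (X_i))`. -/
theorem change_of_measure_inequality
    [Fintype X] [Nonempty X] [MeasurableSpace X] [DiscreteMeasurableSpace X]
    (p q : X → ℝ) (hp : IsPMF p) (hq : IsPMF q)
    (hsupp : ∀ x, 0 < q x → 0 < p x)
    (Pinf : Measure (ℕ → X)) [IsProbabilityMeasure Pinf]
    (hPinf : HasLaw Pinf (fun _ => p))
    (Pc : ℕ → Measure (ℕ → X)) (hPcprob : ∀ ν, IsProbabilityMeasure (Pc ν))
    (hPc : ∀ ν, HasLaw (Pc ν) (fun i => if i < ν then p else q))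
    (T : (ℕ → X) → ℕ∞)
    (hstop : ∀ n : ℕ, MeasurableSet[filt X n] {ω | T ω ≤ (n : ℕ∞)})
    (ν m : ℕ) (hm : 1 ≤ m) (c : ℝ) :
    Pc ν {ω | (ν : ℕ∞) < T ω ∧ T ω < ((ν + m : ℕ) : ℕ∞)} ≤
      ENNReal.ofReal (Real.exp c) * Pinf {ω | T ω < ((ν + m : ℕ) : ℕ∞)} +
      Pc ν {ω | ∃ n : ℕ, ν ≤ n ∧ n < ν + m ∧
        (c : EReal) ≤ ∑ i ∈ Finset.Ico ν n, llr p q (ω i)} :=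
  change_of_measure_inequality_general p q hsupp Pinf hPinf Pc hPc T hstop ν m c

end QCPD
end
end
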